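/- arXiv:math/9809093 — 3 statements merged into one kernel-verified Lean document; each statement's English description precedes it below -/
import Mathlib

section
/- Let A1 be a self-adjoint operator on a Hilbert space H1 and let V : B(H1) → B(H1) be a map such that for every bounded operator X with ‖X‖ ≤ r one has ‖V(A1 + X)‖ ≤ v/(d − r) and ‖V(A1 + X) − V(A1 + Y)‖ ≤ (v/(d − r)²)‖X − Y‖ whenever ‖X‖, ‖Y‖ ≤ r, where 0 < v < d²/4. Then for every r with d/2 − sqrt(d²/4 − v) ≤ r < d − sqrt(v), the map F(X) = V(A1 + X) has a unique fixed point X in the closed ball of radius r in B(H1); moreover this fixed point is the same for all such r and satisfies ‖X‖ ≤ d/2 − sqrt(d²/4 − v). -/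
/-!
Let `r₀` be the smaller root of `r * (d - r) = v`. Then `v / (d - r₀) = r₀`, so `F` maps the
closed ball of radius `r₀` into itself, and there it is a contraction with constant
`v / (d - r₀) ^ 2 = r₀ / (d - r₀) < 1`; Banach's theorem gives a unique fixed point in that ball.
Any fixed point `Y` with `‖Y‖ < d - √v` satisfies `‖Y‖ * (d - ‖Y‖) ≤ v`, and as `d - √v` does not
exceed the larger root, `‖Y‖ ≤ r₀`: so `Y` is the fixed point already found.
-/

open Set Metric Function

/-- The smaller root of `t * (d - t) = v`. -/
noncomputable def smallerRoot (d v : ℝ) : ℝ := d / 2 - √(d ^ 2 / 4 - v)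

section SmallerRoot

variable {d v : ℝ}

theorem smallerRoot_mul_sub_smallerRoot (hvd : v ≤ d ^ 2 / 4) :
    smallerRoot d v * (d - smallerRoot d v) = v := by
  have hs := Real.sq_sqrt (sub_nonneg.2 hvd)
  unfold smallerRoot
  linear_combination -hs

theorem smallerRoot_pos (hd : 0 < d) (hv : 0 < v) : 0 < smallerRoot d v := by
  have : √(d ^ 2 / 4 - v) < d / 2 := (Real.sqrt_lt' (by positivity)).2 (by linarith)
  unfold smallerRoot
  linarith

theorem smallerRoot_lt_half (hvd : v < d ^ 2 / 4) : smallerRoot d v < d / 2 := by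
  have : 0 < √(d ^ 2 / 4 - v) := Real.sqrt_pos.2 (by linarith)
  unfold smallerRoot
  linarith

theorem div_sub_smallerRoot (hd : 0 < d) (hvd : v < d ^ 2 / 4) :
    v / (d - smallerRoot d v) = smallerRoot d v := by
  have : 0 < d - smallerRoot d v := by linarith [smallerRoot_lt_half hvd]
  rw [div_eq_iff this.ne', smallerRoot_mul_sub_smallerRoot hvd.le]

theorem div_sub_smallerRoot_sq_lt_one (hd : 0 < d) (hvd : v < d ^ 2 / 4) :
    v / (d - smallerRoot d v) ^ 2 < 1 := by
  have hlt := smallerRoot_lt_half hvd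
  have : 0 < d - smallerRoot d v := by linarith
  rw [pow_two, ← div_div, div_sub_smallerRoot hd hvd, div_lt_one this]
  linarith

/-- The larger root `d / 2 + √(d ^ 2 / 4 - v)` is at least `d - √v`. -/
theorem le_smallerRoot_of_mul_sub_le (hv : 0 ≤ v) (hvd : v ≤ d ^ 2 / 4) {t : ℝ}
    (ht : t < d - √v) (htv : t * (d - t) ≤ v) : t ≤ smallerRoot d v := by
  have hs := Real.sq_sqrt (sub_nonneg.2 hvd)
  have hsv := Real.sq_sqrt hv
  have hlarger : d / 2 - √v ≤ √(d ^ 2 / 4 - v) := by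
    rcases le_or_gt (d / 2 - √v) 0 with hneg | hpos
    · exact hneg.trans (Real.sqrt_nonneg _)
    · rw [Real.le_sqrt' hpos]
      nlinarith [mul_le_mul_of_nonneg_right hpos.le (Real.sqrt_nonneg v)]
  have ht' : t < d / 2 + √(d ^ 2 / 4 - v) := by linarith
  unfold smallerRoot
  by_contra! h
  nlinarith [mul_pos (sub_pos.2 h) (sub_pos.2 ht')]

end SmallerRoot

theorem LipschitzOnWith.existsUnique_isFixedPt {α : Type*} [MetricSpace α] {f : α → α}
    {s : Set α} {K : NNReal} (hK : K < 1) (hf : LipschitzOnWith K f s) (hsc : IsComplete s)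
    (hsf : MapsTo f s s) (hs : s.Nonempty) : ∃! x, x ∈ s ∧ IsFixedPt f x := by
  have hcontr : ContractingWith K (hsf.restrict f s s) := ⟨hK, hf.mapsToRestrict hsf⟩
  obtain ⟨x₀, hx₀⟩ := hs
  obtain ⟨x, hxs, hx, -⟩ := hcontr.exists_fixedPoint' hsc hsf hx₀ (edist_ne_top _ _)
  refine ⟨x, ⟨hxs, hx⟩, fun y ⟨hys, hy⟩ => ?_⟩
  have hrestrict : ∀ {z} (hz : z ∈ s), IsFixedPt f z → IsFixedPt (hsf.restrict f s s) ⟨z, hz⟩ :=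
    fun _ h => Subtype.ext h
  exact congrArg Subtype.val (hcontr.fixedPoint_unique' (hrestrict hys hy) (hrestrict hxs hx))

/-- abstract core of Theorem 1, solvability of the basic equation.
`F X = V(A₁ + X)` satisfies `‖F X‖ ≤ v/(d − ‖X‖)` and the Lipschitz bound
`‖F X − F Y‖ ≤ v/(d − r)² ‖X − Y‖` on balls of radius `r < d`, with `0 < v < d²/4`.
Then for every `r` with `d/2 − √(d²/4 − v) ≤ r < d − √v`, `F` has a unique fixed point in the
closed ball of radius `r`; this fixed point is the same for all such `r` and lies in the ball
of radius `d/2 − √(d²/4 − v)`. -/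
theorem basic_equation_unique_fixed_point
    {H1 : Type*} [NormedAddCommGroup H1] [InnerProductSpace ℂ H1] [CompleteSpace H1]
    (F : (H1 →L[ℂ] H1) → (H1 →L[ℂ] H1))
    (d v : ℝ) (hd : 0 < d) (hv : 0 < v) (hvd : v < d ^ 2 / 4)
    (hbound : ∀ r : ℝ, 0 ≤ r → r < d → ∀ X : H1 →L[ℂ] H1, ‖X‖ ≤ r →
      ‖F X‖ ≤ v / (d - r))
    (hlip : ∀ r : ℝ, 0 ≤ r → r < d → ∀ X Y : H1 →L[ℂ] H1, ‖X‖ ≤ r → ‖Y‖ ≤ r →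
      ‖F X - F Y‖ ≤ v / (d - r) ^ 2 * ‖X - Y‖) :
    ∃ X : H1 →L[ℂ] H1,
      ‖X‖ ≤ d / 2 - Real.sqrt (d ^ 2 / 4 - v) ∧ F X = X ∧
      ∀ r : ℝ, d / 2 - Real.sqrt (d ^ 2 / 4 - v) ≤ r → r < d - Real.sqrt v →
        ∀ Y : H1 →L[ℂ] H1, ‖Y‖ ≤ r → F Y = Y → Y = X := by
  have hr₀ : 0 ≤ smallerRoot d v := (smallerRoot_pos hd hv).le
  have hr₀d : smallerRoot d v < d := (smallerRoot_lt_half hvd).trans (half_lt_self hd)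
  have hmaps : MapsTo F (closedBall 0 (smallerRoot d v)) (closedBall 0 (smallerRoot d v)) := by
    intro X hX
    rw [mem_closedBall_zero_iff] at hX ⊢
    exact (hbound _ hr₀ hr₀d X hX).trans_eq (div_sub_smallerRoot hd hvd)
  have hcontr : LipschitzOnWith (v / (d - smallerRoot d v) ^ 2).toNNReal F
      (closedBall 0 (smallerRoot d v)) :=
    LipschitzOnWith.of_dist_le' fun X hX Y hY => by
      simpa only [dist_eq_norm] using
        hlip _ hr₀ hr₀d X Y (mem_closedBall_zero_iff.1 hX) (mem_closedBall_zero_iff.1 hY)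
  obtain ⟨X, ⟨hX, hFX⟩, huniq⟩ := hcontr.existsUnique_isFixedPt
    (Real.toNNReal_lt_one.2 (div_sub_smallerRoot_sq_lt_one hd hvd))
    isClosed_closedBall.isComplete hmaps (nonempty_closedBall.2 hr₀)
  refine ⟨X, mem_closedBall_zero_iff.1 hX, hFX, fun r _ hr Y hY hFY => huniq Y ⟨?_, hFY⟩⟩
  have hYd : ‖Y‖ < d - √v := hY.trans_lt hr
  have hYv : ‖Y‖ * (d - ‖Y‖) ≤ v := by
    have hdY : 0 < d - ‖Y‖ := by linarith [Real.sqrt_nonneg v]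
    have := hbound ‖Y‖ (norm_nonneg Y) (sub_pos.1 hdY) Y le_rfl
    rwa [hFY, le_div_iff₀ hdY] at this
  exact mem_closedBall_zero_iff.2 (le_smallerRoot_of_mul_sub_le hv.le hvd.le hYd hYv)
end

section
/- Let H be a self-adjoint operator on a Hilbert space H = H0 ⊕ H1 given in block form H = [[A0, B01],[B10, A1]] with B01 bounded and B10 = B01*. If λ is a real number in the resolvent set of A0 and ψ1 ∈ D(A1) satisfies A1ψ1 − B10(A0 − λ)⁻¹B01ψ1 = λψ1, then the vector Ψ = (−(A0 − λ)⁻¹B01ψ1, ψ1) satisfies HΨ = λΨ. Conversely, if HΨ = λΨ for Ψ = (ψ0, ψ1) with ψ0 ∈ D(A0), ψ1 ∈ D(A1), and λ ∈ ρ(A0), then ψ0 = −(A0 − λ)⁻¹B01ψ1 and A1ψ1 − B10(A0 − λ)⁻¹B01ψ1 = λψ1. -/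
set_option linter.unusedVariables false

/-- Lemma 2 of the paper.  For the self-adjoint block matrix
`H = [[A0, B01], [B10, A1]]` (acting componentwise on `H0 ⊕ H1`), a real `λ ∈ ρ(A0)`, and
`R0 = (A0 − λ)⁻¹`: if `ψ1 ∈ D(A1)` solves the transfer-function equation
`A1ψ1 − B10 R0 B01 ψ1 = λψ1`, then `Ψ = (−R0 B01 ψ1, ψ1)` satisfies `HΨ = λΨ`
(componentwise); conversely, if `HΨ = λΨ` then `ψ0 = −R0 B01 ψ1` and `ψ1` solves the
transfer-function equation. -/
theorem transfer_function_eigenvector_correspondence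
    {H0 H1 : Type*}
    [NormedAddCommGroup H0] [InnerProductSpace ℂ H0] [CompleteSpace H0]
    [NormedAddCommGroup H1] [InnerProductSpace ℂ H1] [CompleteSpace H1]
    (A0 : H0 →ₗ.[ℂ] H0) (A1 : H1 →ₗ.[ℂ] H1)
    (hA0 : IsSelfAdjoint A0) (hA1 : IsSelfAdjoint A1)
    (B01 : H1 →L[ℂ] H0)
    (lam : ℝ) (R0 : H0 →L[ℂ] H0)
    -- `R0` is a two-sided bounded inverse of `A0 − λ` (`λ ∈ ρ(A0)`):
    (hR1 : ∀ u : A0.domain, R0 (A0 u - (lam : ℂ) • (u : H0)) = u)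
    (hR2 : ∀ v : H0, ∃ hv : R0 v ∈ A0.domain, A0 ⟨R0 v, hv⟩ - (lam : ℂ) • R0 v = v) :
    -- direct statement:
    (∀ ψ1 : A1.domain,
      A1 ψ1 - (ContinuousLinearMap.adjoint B01) (R0 (B01 (ψ1 : H1)))
          = (lam : ℂ) • (ψ1 : H1) →
      ∃ h0 : -R0 (B01 (ψ1 : H1)) ∈ A0.domain,
        A0 ⟨-R0 (B01 (ψ1 : H1)), h0⟩ + B01 (ψ1 : H1)
            = (lam : ℂ) • (-R0 (B01 (ψ1 : H1))) ∧
        (ContinuousLinearMap.adjoint B01) (-R0 (B01 (ψ1 : H1))) + A1 ψ1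
            = (lam : ℂ) • (ψ1 : H1)) ∧
    -- converse statement:
    (∀ (ψ0 : A0.domain) (ψ1 : A1.domain),
      A0 ψ0 + B01 (ψ1 : H1) = (lam : ℂ) • (ψ0 : H0) →
      (ContinuousLinearMap.adjoint B01) (ψ0 : H0) + A1 ψ1 = (lam : ℂ) • (ψ1 : H1) →
      (ψ0 : H0) = -R0 (B01 (ψ1 : H1)) ∧
        A1 ψ1 - (ContinuousLinearMap.adjoint B01) (R0 (B01 (ψ1 : H1)))
          = (lam : ℂ) • (ψ1 : H1)) := by
  constructor
  · intro ψ1 h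
    obtain ⟨hv, hEq⟩ := hR2 (B01 (ψ1 : H1))
    refine ⟨A0.domain.neg_mem hv, ?_, ?_⟩
    · have harg : (⟨-R0 (B01 (ψ1 : H1)), A0.domain.neg_mem hv⟩ : A0.domain)
          = -⟨R0 (B01 (ψ1 : H1)), hv⟩ := Subtype.ext rfl
      rw [harg, A0.map_neg]
      have := hEq
      rw [smul_neg]
      linear_combination (norm := module) -this
    · rw [map_neg]
      linear_combination (norm := module) h
  · intro ψ0 ψ1 h0 h1
    have key : (ψ0 : H0) = -R0 (B01 (ψ1 : H1)) := by
      have h2 : A0 ψ0 - (lam : ℂ) • (ψ0 : H0) = -(B01 (ψ1 : H1)) := by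
        linear_combination (norm := module) h0
      have := hR1 ψ0
      rw [h2, map_neg] at this
      exact this.symm
    refine ⟨key, ?_⟩
    rw [key, map_neg] at h1
    linear_combination (norm := module) h1
end

section
/- Let A be a self-adjoint operator on a Hilbert space H0, E its projection-valued spectral measure, and B ∈ B(H1, H0) a Hilbert–Schmidt operator. Define V(B) = sup over finite measurable partitions {δ_k} of σ(A) of Σ_k ‖B* E(δ_k) B‖. Then ‖B‖² ≤ V(B) ≤ ‖B‖₂², where ‖B‖₂ is the Hilbert–Schmidt norm. -/
/-!
Each term of a partition sum is `‖B* E(δ) B‖ = ‖E(δ) B‖²`, and the squared operator norm is at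
most the squared Hilbert–Schmidt norm. Summing over the partition and exchanging the two sums, the
projections `E(δₖ)` add up to the identity, so `∑ₖ ‖E(δₖ) B eⱼ‖² = ‖B eⱼ‖²` by Pythagoras; this
gives the upper bound. The lower bound is the sum over the one-piece partition `{σ(A)}`, which is
admissible because the spectrum is closed: the resolvent set is open by the Neumann series.
-/

set_option linter.unusedVariables false

/-- `R` is a two-sided bounded inverse of `A - z` on the domain of `A`. -/
def IsBddResolventOf {H : Type*} [NormedAddCommGroup H] [InnerProductSpace ℂ H]
    (A : H →ₗ.[ℂ] H) (z : ℂ) (R : H →L[ℂ] H) : Prop :=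
  (∀ u : A.domain, R (A u - z • (u : H)) = u) ∧
    ∀ v : H, ∃ hv : R v ∈ A.domain, A ⟨R v, hv⟩ - z • R v = v

open scoped InnerProductSpace
open ContinuousLinearMap Filter Function Topology

theorem HilbertBasis.hasSum_norm_inner_sq {ι 𝕜 E : Type*} [RCLike 𝕜] [NormedAddCommGroup E]
    [InnerProductSpace 𝕜 E] (b : HilbertBasis ι 𝕜 E) (x : E) :
    HasSum (fun i => ‖⟪b i, x⟫_𝕜‖ ^ 2) (‖x‖ ^ 2) := by
  have h := b.hasSum_inner_mul_inner x x
  simp only [← inner_conj_symm x (b _), RCLike.conj_mul, inner_self_eq_norm_sq_to_K] at h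
  exact_mod_cast h

theorem ContinuousLinearMap.opNorm_sq_le_tsum_norm_apply_sq {ι 𝕜 E F : Type*} [RCLike 𝕜]
    [NormedAddCommGroup E] [InnerProductSpace 𝕜 E] [CompleteSpace E]
    [NormedAddCommGroup F] [InnerProductSpace 𝕜 F] [CompleteSpace F]
    (b : HilbertBasis ι 𝕜 E) (C : E →L[𝕜] F) (hC : Summable fun i => ‖C (b i)‖ ^ 2) :
    ‖C‖ ^ 2 ≤ ∑' i, ‖C (b i)‖ ^ 2 := by
  set M := ∑' i, ‖C (b i)‖ ^ 2
  have hM : 0 ≤ M := tsum_nonneg fun i => by positivity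
  have hadj : ∀ y, ‖adjoint C y‖ ^ 2 ≤ M * ‖y‖ ^ 2 := fun y => by
    rw [← (b.hasSum_norm_inner_sq _).tsum_eq, ← tsum_mul_right]
    refine (b.hasSum_norm_inner_sq _).summable.tsum_le_tsum (fun i => ?_) (hC.mul_right _)
    rw [adjoint_inner_right, ← mul_pow]
    gcongr
    exact norm_inner_le_norm _ _
  have hnorm : ‖adjoint C‖ ≤ √M := opNorm_le_bound _ (Real.sqrt_nonneg M) fun y =>
    (pow_le_pow_iff_left₀ (norm_nonneg _) (by positivity) two_ne_zero).1 <| by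
      rw [mul_pow, Real.sq_sqrt hM]
      exact hadj y
  calc ‖C‖ ^ 2 = ‖adjoint C‖ ^ 2 := by rw [LinearIsometryEquiv.norm_map]
    _ ≤ √M ^ 2 := by gcongr
    _ = M := Real.sq_sqrt hM

section StarProjection
variable {𝕜 E F : Type*} [RCLike 𝕜]
  [NormedAddCommGroup E] [InnerProductSpace 𝕜 E] [CompleteSpace E]
  [NormedAddCommGroup F] [InnerProductSpace 𝕜 F] [CompleteSpace F]

theorem IsStarProjection.norm_apply_sq {P : E →L[𝕜] E} (hP : IsStarProjection P) (x : E) :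
    ‖P x‖ ^ 2 = RCLike.re ⟪x, P x⟫_𝕜 := by
  rw [norm_sq_eq_re_inner (𝕜 := 𝕜), ← adjoint_inner_right, ← star_eq_adjoint,
    hP.isSelfAdjoint.star_eq, ← mul_apply_eq_comp, hP.isIdempotentElem.eq]

theorem IsStarProjection.norm_adjoint_comp_comp {P : E →L[𝕜] E} (hP : IsStarProjection P)
    (C : F →L[𝕜] E) :
    ‖adjoint C ∘L P ∘L C‖ = ‖P ∘L C‖ ^ 2 := by
  have : adjoint C ∘L P ∘L C = adjoint (P ∘L C) ∘L (P ∘L C) := by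
    have hPP : P ∘L P = P := hP.isIdempotentElem
    rw [adjoint_comp, ← star_eq_adjoint P, hP.isSelfAdjoint.star_eq,
      ContinuousLinearMap.comp_assoc, ← ContinuousLinearMap.comp_assoc P, hPP]
  rw [this, norm_adjoint_comp_self, sq]

theorem sum_norm_apply_sq_of_sum_eq_one {ι : Type*} [Fintype ι] {P : ι → E →L[𝕜] E}
    (hP : ∀ k, IsStarProjection (P k)) (hsum : ∑ k, P k = 1) (x : E) :
    ∑ k, ‖P k x‖ ^ 2 = ‖x‖ ^ 2 := by
  calc ∑ k, ‖P k x‖ ^ 2 = ∑ k, RCLike.re ⟪x, P k x⟫_𝕜 :=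
        Finset.sum_congr rfl fun k _ => (hP k).norm_apply_sq x
    _ = RCLike.re ⟪x, (∑ k, P k) x⟫_𝕜 := by rw [sum_apply, inner_sum, map_sum]
    _ = ‖x‖ ^ 2 := by rw [hsum, one_apply_eq_self, norm_sq_eq_re_inner (𝕜 := 𝕜)]

end StarProjection

theorem sum_norm_adjoint_comp_comp_le_tsum {ι ι' 𝕜 E F : Type*} [Fintype ι'] [RCLike 𝕜]
    [NormedAddCommGroup E] [InnerProductSpace 𝕜 E] [CompleteSpace E]
    [NormedAddCommGroup F] [InnerProductSpace 𝕜 F] [CompleteSpace F]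
    {P : ι' → E →L[𝕜] E} (hP : ∀ k, IsStarProjection (P k)) (hsum : ∑ k, P k = 1)
    (b : HilbertBasis ι 𝕜 F) (C : F →L[𝕜] E) (hC : Summable fun i => ‖C (b i)‖ ^ 2) :
    ∑ k, ‖adjoint C ∘L P k ∘L C‖ ≤ ∑' i, ‖C (b i)‖ ^ 2 := by
  have hPC : ∀ k, Summable fun i => ‖(P k ∘L C) (b i)‖ ^ 2 := fun k =>
    .of_nonneg_of_le (fun i => by positivity)
      (fun i => by rw [ContinuousLinearMap.comp_apply, ← mul_pow]; gcongr; exact le_opNorm _ _)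
      (hC.mul_left (‖P k‖ ^ 2))
  calc ∑ k, ‖adjoint C ∘L P k ∘L C‖ = ∑ k, ‖P k ∘L C‖ ^ 2 :=
        Finset.sum_congr rfl fun k _ => (hP k).norm_adjoint_comp_comp C
    _ ≤ ∑ k, ∑' i, ‖(P k ∘L C) (b i)‖ ^ 2 :=
        Finset.sum_le_sum fun k _ => opNorm_sq_le_tsum_norm_apply_sq b _ (hPC k)
    _ = ∑' i, ∑ k, ‖P k (C (b i))‖ ^ 2 := (Summable.tsum_finsetSum fun k _ => hPC k).symm
    _ = ∑' i, ‖C (b i)‖ ^ 2 := tsum_congr fun i => sum_norm_apply_sq_of_sum_eq_one hP hsum _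

theorem map_iUnion_fin_eq_sum {α M : Type*} [MeasurableSpace α] [AddCancelCommMonoid M]
    {m : Set α → M} (hm : ∀ s t, MeasurableSet s → MeasurableSet t → Disjoint s t →
      m (s ∪ t) = m s + m t) :
    ∀ {n : ℕ} {δ : Fin n → Set α}, (∀ k, MeasurableSet (δ k)) → Pairwise (Disjoint on δ) →
      m (⋃ k, δ k) = ∑ k, m (δ k)
  | 0, δ, _, _ => by
    have h := hm ∅ ∅ .empty .empty (disjoint_bot_left)
    rw [Set.union_self, left_eq_add] at h
    simp [h]
  | n + 1, δ, hδ, hd => by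
    have hunion : ⋃ k, δ k = δ 0 ∪ ⋃ k : Fin n, δ k.succ := by ext; simp [Fin.exists_fin_succ]
    rw [hunion, Fin.sum_univ_succ,
      hm _ _ (hδ 0) (.iUnion fun k => hδ _)
        (Set.disjoint_iUnion_right.2 fun k => hd (Fin.succ_ne_zero k).symm),
      map_iUnion_fin_eq_sum hm (fun k => hδ k.succ) (hd.comp_of_injective (Fin.succ_injective n))]

section Resolvent
variable {H : Type*} [NormedAddCommGroup H] [InnerProductSpace ℂ H] [CompleteSpace H]
  {A : H →ₗ.[ℂ] H}

theorem IsBddResolventOf.add {z : ℂ} {R : H →L[ℂ] H} (hR : IsBddResolventOf A z R) {w : ℂ}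
    (hw : ‖w • R‖ < 1) :
    IsBddResolventOf A (z + w) (↑(Units.oneSub (w • R) hw)⁻¹ * R : H →L[ℂ] H) := by
  set U := Units.oneSub (w • R) hw
  set V : H →L[ℂ] H := ↑U⁻¹
  have hU : ∀ x, (U : H →L[ℂ] H) x = x - w • R x := fun x => rfl
  have hcomm : Commute R U := by
    show Commute R (1 - w • R)
    exact (Commute.one_right R).sub_right ((Commute.refl R).smul_right w)
  obtain ⟨hleft, hright⟩ := hR
  refine ⟨fun u => ?_, fun v => ?_⟩
  · have h : R (A u - (z + w) • (u : H)) = (U : H →L[ℂ] H) u := by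
      rw [add_smul, ← sub_sub, map_sub, hleft, map_smul, hU]
    rw [mul_apply_eq_comp, h, ← mul_apply_eq_comp, U.inv_mul, one_apply_eq_self]
  · have hRV : (V * R) v = R (V v) := by rw [← hcomm.units_inv_right.eq]; rfl
    obtain ⟨hdom, heq⟩ := hright (V v)
    refine ⟨hRV ▸ hdom, ?_⟩
    simp only [hRV]
    rw [add_smul, ← sub_sub, heq, ← hU, ← mul_apply_eq_comp, U.mul_inv, one_apply_eq_self]

theorem isOpen_setOf_exists_isBddResolventOf (A : H →ₗ.[ℂ] H) :
    IsOpen {z : ℂ | ∃ R, IsBddResolventOf A z R} := by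
  refine isOpen_iff_mem_nhds.2 fun z ⟨R, hR⟩ => ?_
  have hsmall : ∀ᶠ z' in 𝓝 z, ‖(z' - z) • R‖ < 1 := by
    have h : Continuous fun z' : ℂ => ‖(z' - z) • R‖ := by fun_prop
    exact h.continuousAt.eventually_lt continuousAt_const (by simp)
  filter_upwards [hsmall] with z' hz'
  exact ⟨_, by simpa using hR.add hz'⟩

theorem isClosed_of_forall_not_exists_isBddResolventOf_iff {S : Set ℝ}
    (hS : ∀ z : ℂ, (¬ ∃ R, IsBddResolventOf A z R) ↔ ∃ x ∈ S, z = (x : ℂ)) : IsClosed S := by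
  have hS' : S = Complex.ofReal ⁻¹' {z | ∃ R, IsBddResolventOf A z R}ᶜ := by
    ext x
    simp [hS]
  rw [hS']
  exact (isOpen_setOf_exists_isBddResolventOf A).isClosed_compl.preimage Complex.continuous_ofReal

end Resolvent

/-- The paper's variation is `V(B) = sSup (partitionSums σ(A) fun δ => ‖B* E(δ) B‖)`. -/
def partitionSums {α : Type*} [MeasurableSpace α] (S : Set α) (f : Set α → ℝ) : Set ℝ :=
  {x | ∃ (n : ℕ) (δ : Fin n → Set α), (∀ k, MeasurableSet (δ k)) ∧
    (∀ k j, k ≠ j → Disjoint (δ k) (δ j)) ∧ (⋃ k, δ k) = S ∧ x = ∑ k, f (δ k)}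

theorem self_mem_partitionSums {α : Type*} [MeasurableSpace α] {S : Set α} (hS : MeasurableSet S)
    (f : Set α → ℝ) : f S ∈ partitionSums S f :=
  ⟨1, fun _ => S, fun _ => hS, fun k j hkj => absurd (Subsingleton.elim k j) hkj,
    Set.iUnion_const S, by simp⟩

theorem variation_two_sided_estimate_general
    {H0 H1 : Type*}
    [NormedAddCommGroup H0] [InnerProductSpace ℂ H0] [CompleteSpace H0]
    [NormedAddCommGroup H1] [InnerProductSpace ℂ H1] [CompleteSpace H1]
    (A : H0 →ₗ.[ℂ] H0)
    -- `S` is the spectrum of `A` (a subset of the reals):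
    (S : Set ℝ)
    (hS : ∀ z : ℂ, (¬ ∃ R : H0 →L[ℂ] H0, IsBddResolventOf A z R) ↔ ∃ x ∈ S, z = (x : ℂ))
    -- `E` is the projection-valued spectral measure of `A`:
    (E : Set ℝ → (H0 →L[ℂ] H0))
    (hproj : ∀ s : Set ℝ, IsSelfAdjoint (E s) ∧ E s ∘L E s = E s)
    (hadd : ∀ s t : Set ℝ, MeasurableSet s → MeasurableSet t → Disjoint s t →
      E (s ∪ t) = E s + E t)
    (htotal : E S = 1)
    -- `B` is Hilbert–Schmidt with respect to a Hilbert basis `e` of `H1`: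
    (B : H1 →L[ℂ] H0) (K : Type*) (e : HilbertBasis K ℂ H1)
    (hHS : Summable (fun k : K => ‖B (e k)‖ ^ 2)) :
    ‖B‖ ^ 2 ≤
      sSup {x : ℝ | ∃ (n : ℕ) (δ : Fin n → Set ℝ),
        (∀ k, MeasurableSet (δ k)) ∧
        (∀ k j, k ≠ j → Disjoint (δ k) (δ j)) ∧
        (⋃ k, δ k) = S ∧
        x = ∑ k, ‖(ContinuousLinearMap.adjoint B) ∘L E (δ k) ∘L B‖} ∧
    sSup {x : ℝ | ∃ (n : ℕ) (δ : Fin n → Set ℝ),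
        (∀ k, MeasurableSet (δ k)) ∧
        (∀ k j, k ≠ j → Disjoint (δ k) (δ j)) ∧
        (⋃ k, δ k) = S ∧
        x = ∑ k, ‖(ContinuousLinearMap.adjoint B) ∘L E (δ k) ∘L B‖} ≤
      ∑' k : K, ‖B (e k)‖ ^ 2 := by
  have hE : ∀ s, IsStarProjection (E s) := fun s => ⟨(hproj s).2, (hproj s).1⟩
  have hmem : ‖B‖ ^ 2 ∈ partitionSums S fun s => ‖adjoint B ∘L E s ∘L B‖ := by
    convert self_mem_partitionSums
      (isClosed_of_forall_not_exists_isBddResolventOf_iff hS).measurableSet _ using 1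
    rw [htotal, one_def, ContinuousLinearMap.id_comp, norm_adjoint_comp_self, sq]
  have hbound : ∀ x ∈ partitionSums S fun s => ‖adjoint B ∘L E s ∘L B‖,
      x ≤ ∑' k, ‖B (e k)‖ ^ 2 := by
    rintro _ ⟨n, δ, hδ, hd, rfl, rfl⟩
    refine sum_norm_adjoint_comp_comp_le_tsum (fun k => hE _) ?_ e B hHS
    rw [← map_iUnion_fin_eq_sum hadd hδ hd, htotal]
  exact ⟨le_csSup ⟨_, hbound⟩ hmem, csSup_le ⟨_, hmem⟩ hbound⟩

/-- two-sided estimate for the variation `V(B)` of Section 2.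
Let `A` be self-adjoint with spectrum `S ⊆ ℝ` and spectral measure `E`, and let
`B : H1 → H0` be Hilbert–Schmidt (`Σ_k ‖B e_k‖² < ∞` for a Hilbert basis `e`).  With
`V(B) = sup_{partitions {δ_k} of S} Σ_k ‖B* E(δ_k) B‖`, one has `‖B‖² ≤ V(B) ≤ ‖B‖₂²`. -/
theorem variation_two_sided_estimate
    {H0 H1 : Type*}
    [NormedAddCommGroup H0] [InnerProductSpace ℂ H0] [CompleteSpace H0]
    [NormedAddCommGroup H1] [InnerProductSpace ℂ H1] [CompleteSpace H1]
    (A : H0 →ₗ.[ℂ] H0) (hA : IsSelfAdjoint A)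
    -- `S` is the spectrum of `A` (a subset of the reals):
    (S : Set ℝ)
    (hS : ∀ z : ℂ, (¬ ∃ R : H0 →L[ℂ] H0, IsBddResolventOf A z R) ↔ ∃ x ∈ S, z = (x : ℂ))
    -- `E` is the projection-valued spectral measure of `A`:
    (E : Set ℝ → (H0 →L[ℂ] H0))
    (hproj : ∀ s : Set ℝ, IsSelfAdjoint (E s) ∧ E s ∘L E s = E s)
    (hadd : ∀ s t : Set ℝ, MeasurableSet s → MeasurableSet t → Disjoint s t →
      E (s ∪ t) = E s + E t)
    (htotal : E S = 1)
    (hmul : ∀ s t : Set ℝ, E s ∘L E t = E (s ∩ t))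
    -- `B` is Hilbert–Schmidt with respect to a Hilbert basis `e` of `H1`:
    (B : H1 →L[ℂ] H0) (K : Type*) (e : HilbertBasis K ℂ H1)
    (hHS : Summable (fun k : K => ‖B (e k)‖ ^ 2)) :
    ‖B‖ ^ 2 ≤
      sSup {x : ℝ | ∃ (n : ℕ) (δ : Fin n → Set ℝ),
        (∀ k, MeasurableSet (δ k)) ∧
        (∀ k j, k ≠ j → Disjoint (δ k) (δ j)) ∧
        (⋃ k, δ k) = S ∧
        x = ∑ k, ‖(ContinuousLinearMap.adjoint B) ∘L E (δ k) ∘L B‖} ∧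
    sSup {x : ℝ | ∃ (n : ℕ) (δ : Fin n → Set ℝ),
        (∀ k, MeasurableSet (δ k)) ∧
        (∀ k j, k ≠ j → Disjoint (δ k) (δ j)) ∧
        (⋃ k, δ k) = S ∧
        x = ∑ k, ‖(ContinuousLinearMap.adjoint B) ∘L E (δ k) ∘L B‖} ≤
      ∑' k : K, ‖B (e k)‖ ^ 2 :=
  variation_two_sided_estimate_general A S hS E hproj hadd htotal B K e hHS
end
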